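/- Under the bijection between Coxeter elements and acyclic orientations of the Coxeter graph, rotation of a Coxeter word (moving the first letter to the end) corresponds exactly to firing the corresponding sink; hence two Coxeter elements are rotation equivalent if and only if their acyclic orientations lie in the same reachability class under sink firing. -/

import Mathlib

/-- An edge orientation of a simple graph `G`: each edge gets exactly one direction. -/
structure EdgeOrientation {V : Type*} (G : SimpleGraph V) where
  dir : V → V → Prop
  dir_adj : ∀ u v, dir u v → G.Adj u v
  dir_total : ∀ u v, G.Adj u v → (dir u v ↔ ¬ dir v u)

namespace EdgeOrientation

variable {V : Type*} {G : SimpleGraph V}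

/-- An orientation is acyclic if it admits no directed cycle. -/
def Acyclic (o : EdgeOrientation G) : Prop :=
  ∀ v, ¬ Relation.TransGen o.dir v v

/-- A sink is a vertex with no outgoing edges. -/
def IsSink (o : EdgeOrientation G) (s : V) : Prop :=
  ∀ t, ¬ o.dir s t

/-- The direction relation obtained by reversing all edges incident to `s`. -/
def fireDir (s : V) (d : V → V → Prop) : V → V → Prop :=
  fun u v => ((u = s ∨ v = s) ∧ d v u) ∨ (¬ (u = s ∨ v = s) ∧ d u v)

/-- One sink-firing move on acyclic orientations. -/
def FireStep (o o' : EdgeOrientation G) : Prop :=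
  o.Acyclic ∧ ∃ s, o.IsSink s ∧ o'.dir = fireDir s o.dir

/-- Reachability by finite sequences of sink-firing moves. -/
def Reach (o o' : EdgeOrientation G) : Prop :=
  Relation.ReflTransGen FireStep o o'

/-- `FireSeq o l o'` : starting from `o`, firing the vertices in the list `l` in order
(each of which must be a sink of an acyclic orientation at its turn) yields `o'`. -/
def FireSeq : EdgeOrientation G → List V → EdgeOrientation G → Prop
  | o, [], o' => o = o'
  | o, s :: l, o' =>
      ∃ o₁ : EdgeOrientation G,
        o.Acyclic ∧ o.IsSink s ∧ o₁.dir = fireDir s o.dir ∧ FireSeq o₁ l o'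

end EdgeOrientation

/-- The Coxeter graph of a Coxeter matrix: vertices are the generators, with an edge
between `i` and `j` whenever the corresponding generators do not commute
(i.e. `M i j ≠ 2`). -/
def CoxeterMatrix.graph {B : Type*} (M : CoxeterMatrix B) : SimpleGraph B where
  Adj i j := i ≠ j ∧ M i j ≠ 2
  symm := ⟨fun i j h => ⟨h.1.symm, by rw [M.symmetric]; exact h.2⟩⟩
  loopless := ⟨fun i h => h.1 rfl⟩

/-- A Coxeter word: a list of generators containing each generator exactly once. -/
def IsCoxeterWord {B : Type*} (l : List B) : Prop :=
  l.Nodup ∧ ∀ i : B, i ∈ l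

/-- One commutation move: swapping two adjacent commuting letters. -/
def CommSwap {B : Type*} (M : CoxeterMatrix B) (l l' : List B) : Prop :=
  ∃ (a b : B) (p q : List B), M a b = 2 ∧ l = p ++ a :: b :: q ∧ l' = p ++ b :: a :: q

/-- One rotation move: moving the first letter of a word to the end. -/
def RotMove {B : Type*} (l l' : List B) : Prop :=
  ∃ (a : B) (t : List B), l = a :: t ∧ l' = t ++ [a]

/-- Rotation equivalence: the equivalence relation on words generated by rotations
and commutations of adjacent commuting letters. -/
def RotEquiv {B : Type*} (M : CoxeterMatrix B) : List B → List B → Prop :=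
  Relation.EqvGen (fun l l' => CommSwap M l l' ∨ RotMove l l')

namespace EdgeOrientation

/-- A source is a vertex with no incoming edges. -/
def IsSource {V : Type*} {G : SimpleGraph V} (o : EdgeOrientation G) (s : V) : Prop :=
  ∀ t, ¬ o.dir t s

/-- One source-firing move on acyclic orientations: reverse all edges at a source. -/
def SourceFireStep {V : Type*} {G : SimpleGraph V} (o o' : EdgeOrientation G) : Prop :=
  o.Acyclic ∧ ∃ s, o.IsSource s ∧ o'.dir = fireDir s o.dir

/-- Reachability by finite sequences of source-firing moves. -/
def SourceReach {V : Type*} {G : SimpleGraph V} (o o' : EdgeOrientation G) : Prop :=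
  Relation.ReflTransGen SourceFireStep o o'

end EdgeOrientation

/-- The orientation of the Coxeter graph induced by a word containing all generators:
each edge points from the earlier-occurring letter to the later-occurring one (so the
first letter of the word is a source). -/
def wordOrient {B : Type*} [DecidableEq B] (M : CoxeterMatrix B) (l : List B)
    (hl : ∀ i : B, i ∈ l) : EdgeOrientation M.graph where
  dir u v := M.graph.Adj u v ∧ l.idxOf u < l.idxOf v
  dir_adj := fun u v h => h.1
  dir_total := fun u v hadj => by
    constructor
    · rintro ⟨-, h⟩ ⟨-, h'⟩
      exact absurd h' (Nat.lt_asymm h)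
    · intro h
      refine ⟨hadj, ?_⟩
      rcases Nat.lt_trichotomy (l.idxOf u) (l.idxOf v) with hlt | heq | hgt
      · exact hlt
      · exact absurd ((List.idxOf_inj (hl u)).mp heq) hadj.ne
      · exact absurd ⟨hadj.symm, hgt⟩ h

/-!
The orientation of a Coxeter word records only the relative order of non-commuting letters, so
commutation moves preserve it; conversely two words with the same orientation are related by
commutations, since the first letter of one word commutes with every letter preceding it in the
other and can be moved to the front. Moving the first letter `s` of a word to the end reverses
exactly the edges at the source `s`. Conversely, a source `s` of the orientation of a word commutes
with every letter before it, so the word is commutation equivalent to one starting with `s`, and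
firing `s` is realised by rotating that word. A rotation is undone by the remaining rotations, so
rotation equivalence is generated by forward moves, each of which fixes the orientation or fires
a source.
-/

theorem EdgeOrientation.ext {V : Type*} {G : SimpleGraph V} {o o' : EdgeOrientation G}
    (h : o.dir = o'.dir) : o = o' := by
  cases o; cases o'; cases h; rfl

theorem CoxeterMatrix.eq_two_of_not_adj {B : Type*} (M : CoxeterMatrix B) {i j : B}
    (hij : i ≠ j) (h : ¬ M.graph.Adj i j) : M i j = 2 :=
  not_not.mp fun hM => h ⟨hij, hM⟩

namespace List

variable {α : Type*} [DecidableEq α]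

theorem idxOf_lt_idxOf_append_cons_iff {p q : List α} {a u v : α} (hu : u ≠ a) (hv : v ≠ a) :
    (p ++ a :: q).idxOf u < (p ++ a :: q).idxOf v ↔ (p ++ q).idxOf u < (p ++ q).idxOf v := by
  have hau : (a == u) = false := beq_false_of_ne hu.symm
  have hav : (a == v) = false := beq_false_of_ne hv.symm
  simp only [idxOf_append, idxOf_cons, hau, hav, cond_false]
  split_ifs with hup hvp hvp
  · rfl
  · have := idxOf_lt_length_of_mem hup; omega
  · have := idxOf_lt_length_of_mem hvp; omega
  · omega

theorem idxOf_lt_idxOf_append_cons {p q : List α} {a b : α} (ha : a ∉ p) (hb : b ∈ p) :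
    (p ++ a :: q).idxOf b < (p ++ a :: q).idxOf a := by
  rw [idxOf_append_of_mem hb, idxOf_append_of_notMem ha, idxOf_cons_self]
  exact idxOf_lt_length_of_mem hb

theorem idxOf_lt_idxOf_swap_iff {p q : List α} {a b u v : α}
    (h : (u ≠ a ∧ v ≠ a) ∨ (u ≠ b ∧ v ≠ b)) :
    (p ++ a :: b :: q).idxOf u < (p ++ a :: b :: q).idxOf v ↔
      (p ++ b :: a :: q).idxOf u < (p ++ b :: a :: q).idxOf v := by
  rcases h with ⟨hu, hv⟩ | ⟨hu, hv⟩
  · rw [idxOf_lt_idxOf_append_cons_iff hu hv, show p ++ b :: a :: q = (p ++ [b]) ++ a :: q by simp,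
      idxOf_lt_idxOf_append_cons_iff hu hv, append_assoc, singleton_append]
  · rw [show p ++ a :: b :: q = (p ++ [a]) ++ b :: q by simp,
      idxOf_lt_idxOf_append_cons_iff hu hv, idxOf_lt_idxOf_append_cons_iff hu hv, append_assoc,
      singleton_append]

end List

theorem Relation.eqvGen_eq_reflTransGen_of_reverse {α : Type*} {r : α → α → Prop}
    (h : ∀ a b, r a b → Relation.ReflTransGen r b a) :
    Relation.EqvGen r = Relation.ReflTransGen r := by
  have : IsEquiv α (Relation.ReflTransGen r) :=
    { refl := fun _ => .refl
      trans := fun _ _ _ => .trans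
      symm := fun _ _ hab => by
        induction hab with
        | refl => rfl
        | tail _ hbc ih => exact (h _ _ hbc).trans ih }
  exact Subrelation.antisymm (Relation.EqvGen.eqvGen_le fun _ _ => .single)
    (Relation.EqvGen.reflTransGen_le_eqvGen _)

section Moves

variable {B : Type*} {M : CoxeterMatrix B} {l l' : List B}

theorem CommSwap.symm (h : CommSwap M l l') : CommSwap M l' l := by
  obtain ⟨a, b, p, q, hab, rfl, rfl⟩ := h
  exact ⟨b, a, p, q, M.symmetric a b ▸ hab, rfl, rfl⟩

theorem CommSwap.perm (h : CommSwap M l l') : l.Perm l' := by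
  obtain ⟨a, b, p, q, -, rfl, rfl⟩ := h
  exact (List.Perm.swap b a q).append_left p

theorem CommSwap.cons (c : B) (h : CommSwap M l l') : CommSwap M (c :: l) (c :: l') := by
  obtain ⟨a, b, p, q, hab, rfl, rfl⟩ := h
  exact ⟨a, b, c :: p, q, hab, rfl, rfl⟩

theorem RotMove.perm (h : RotMove l l') : l.Perm l' := by
  obtain ⟨a, t, rfl, rfl⟩ := h
  exact (List.perm_append_singleton a t).symm

theorem IsCoxeterWord.of_perm (hl : IsCoxeterWord l) (h : l.Perm l') : IsCoxeterWord l' :=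
  ⟨h.nodup_iff.mp hl.1, fun i => h.mem_iff.mp (hl.2 i)⟩

theorem reflTransGen_commSwap_cons (c : B) (h : Relation.ReflTransGen (CommSwap M) l l') :
    Relation.ReflTransGen (CommSwap M) (c :: l) (c :: l') :=
  h.lift (c :: ·) fun _ _ => CommSwap.cons c

theorem reflTransGen_commSwap_append_cons {p q : List B} {a : B} (hp : ∀ b ∈ p, M b a = 2) :
    Relation.ReflTransGen (CommSwap M) (p ++ a :: q) (a :: (p ++ q)) := by
  induction p with
  | nil => rfl
  | cons c p ih =>
    have hca : M c a = 2 := hp c List.mem_cons_self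
    have hrest := ih fun b hb => hp b (List.mem_cons_of_mem c hb)
    exact (reflTransGen_commSwap_cons c hrest).tail ⟨c, a, [], p ++ q, hca, rfl, rfl⟩

theorem rotEquiv_of_reflTransGen_commSwap (h : Relation.ReflTransGen (CommSwap M) l l') :
    RotEquiv M l l' :=
  Relation.EqvGen.reflTransGen_le_eqvGen _ _ _
    (Relation.ReflTransGen.mono (fun _ _ => Or.inl) _ _ h)

theorem reflTransGen_rotMove_append (u v : List B) :
    Relation.ReflTransGen RotMove (u ++ v) (v ++ u) := by
  induction u generalizing v with
  | nil => simpa using .refl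
  | cons x u ih =>
    refine .head ⟨x, u ++ v, rfl, rfl⟩ ?_
    simpa using ih (v ++ [x])

def RotStep (M : CoxeterMatrix B) (l l' : List B) : Prop :=
  CommSwap M l l' ∨ RotMove l l'

theorem RotStep.perm (h : RotStep M l l') : l.Perm l' :=
  h.elim CommSwap.perm RotMove.perm

theorem RotStep.reverse (h : RotStep M l l') : Relation.ReflTransGen (RotStep M) l' l := by
  rcases h with h | ⟨a, t, rfl, rfl⟩
  · exact .single (.inl h.symm)
  · exact Relation.ReflTransGen.mono (fun _ _ => Or.inr) _ _ (reflTransGen_rotMove_append t [a])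

end Moves

section WordOrient

variable {B : Type*} [DecidableEq B] {M : CoxeterMatrix B} {l l' : List B}

theorem CommSwap.idxOf_lt_idxOf_iff (h : CommSwap M l l') {u v : B} (hadj : M.graph.Adj u v) :
    l.idxOf u < l.idxOf v ↔ l'.idxOf u < l'.idxOf v := by
  obtain ⟨a, b, p, q, hab, rfl, rfl⟩ := h
  obtain ⟨huv, hM⟩ := hadj
  have hne : a ≠ b := by rintro rfl; simp at hab
  apply List.idxOf_lt_idxOf_swap_iff
  by_contra! hc
  obtain ⟨rfl, rfl⟩ | ⟨rfl, rfl⟩ : (u = a ∧ v = b) ∨ (u = b ∧ v = a) := by grind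
  · exact hM hab
  · exact hM (M.symmetric _ _ ▸ hab)

theorem CommSwap.wordOrient_eq (h : CommSwap M l l') (hl : ∀ i, i ∈ l) (hl' : ∀ i, i ∈ l') :
    wordOrient M l hl = wordOrient M l' hl' :=
  EdgeOrientation.ext <| funext₂ fun _ _ => propext
    ⟨fun ⟨hadj, hlt⟩ => ⟨hadj, (h.idxOf_lt_idxOf_iff hadj).mp hlt⟩,
      fun ⟨hadj, hlt⟩ => ⟨hadj, (h.idxOf_lt_idxOf_iff hadj).mpr hlt⟩⟩

theorem wordOrient_eq_of_reflTransGen_commSwap (h : Relation.ReflTransGen (CommSwap M) l l')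
    (hl : ∀ i, i ∈ l) (hl' : ∀ i, i ∈ l') :
    wordOrient M l hl = wordOrient M l' hl' := by
  induction h with
  | refl => rfl
  | tail _ hmn ih =>
    have hm := fun i => hmn.symm.perm.mem_iff.mp (hl' i)
    exact (ih hm).trans (hmn.wordOrient_eq hm hl')

theorem wordOrient_acyclic (hl : ∀ i, i ∈ l) : (wordOrient M l hl).Acyclic := by
  have hmono : ∀ u v, Relation.TransGen (wordOrient M l hl).dir u v → l.idxOf u < l.idxOf v :=
    fun _ _ h => h.trans_induction_on (fun h => h.2) fun _ _ => lt_trans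
  exact fun v hv => (hmono v v hv).false

theorem wordOrient_rotate_dir {i : B} {t : List B} (hit : i ∉ t) (h : ∀ j, j ∈ i :: t)
    (h' : ∀ j, j ∈ t ++ [i]) :
    (wordOrient M (t ++ [i]) h').dir =
      EdgeOrientation.fireDir i (wordOrient M (i :: t) h).dir := by
  have hidx : (t ++ [i]).idxOf i = t.length := by
    rw [List.idxOf_append_of_notMem hit, List.idxOf_cons_self, add_zero]
  have hlt : ∀ x, x ≠ i → (t ++ [i]).idxOf x < t.length := fun x hx => by
    have hxt : x ∈ t := (List.mem_cons.mp (h x)).resolve_left hx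
    rw [List.idxOf_append_of_mem hxt]
    exact List.idxOf_lt_length_of_mem hxt
  funext u v
  simp only [EdgeOrientation.fireDir, wordOrient]
  by_cases hu : u = i <;> by_cases hv : v = i
  · subst hu hv
    simp
  · subst hu
    simpa [hv, hidx] using fun _ => (hlt v hv).le
  · subst hv
    simp [hu, hidx, hlt u hu, List.idxOf_cons_ne _ (Ne.symm hu), M.graph.adj_comm]
  · simpa [hu, hv, List.idxOf_cons_ne _ (Ne.symm hu), List.idxOf_cons_ne _ (Ne.symm hv)] using
      fun _ => List.idxOf_lt_idxOf_append_cons_iff (p := t) (q := []) hu hv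

theorem sourceFireStep_wordOrient_rotate {i : B} {t : List B} (hit : i ∉ t)
    (h : ∀ j, j ∈ i :: t) (h' : ∀ j, j ∈ t ++ [i]) :
    EdgeOrientation.SourceFireStep (wordOrient M (i :: t) h) (wordOrient M (t ++ [i]) h') :=
  ⟨wordOrient_acyclic h, i, fun u hu => by simpa using hu.2,
    wordOrient_rotate_dir hit h h'⟩

theorem exists_rotEquiv_wordOrient_fireDir (hl : IsCoxeterWord l) {s : B}
    (hs : (wordOrient M l hl.2).IsSource s) :
    ∃ (l' : List B) (hl' : IsCoxeterWord l'), RotEquiv M l l' ∧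
      (wordOrient M l' hl'.2).dir = EdgeOrientation.fireDir s (wordOrient M l hl.2).dir := by
  obtain ⟨p, q, rfl⟩ := List.append_of_mem (hl.2 s)
  have hsn : s ∉ p ++ q := (List.nodup_cons.mp (List.nodup_middle.mp hl.1)).1
  have hsp : s ∉ p := fun h => hsn (List.mem_append_left q h)
  have hcomm : ∀ b ∈ p, M b s = 2 := fun b hb =>
    M.eq_two_of_not_adj (ne_of_mem_of_not_mem hb hsp) fun hadj =>
      hs b ⟨hadj, List.idxOf_lt_idxOf_append_cons hsp hb⟩
  have hswaps := reflTransGen_commSwap_append_cons (q := q) hcomm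
  have hc₁ : IsCoxeterWord (s :: (p ++ q)) := hl.of_perm List.perm_middle
  have hc₂ : IsCoxeterWord ((p ++ q) ++ [s]) :=
    hc₁.of_perm (List.perm_append_singleton _ _).symm
  refine ⟨(p ++ q) ++ [s], hc₂, .trans _ _ _ (rotEquiv_of_reflTransGen_commSwap hswaps)
    (.rel _ _ (Or.inr ⟨s, p ++ q, rfl, rfl⟩)), ?_⟩
  rw [wordOrient_rotate_dir hsn hc₁.2 hc₂.2, wordOrient_eq_of_reflTransGen_commSwap hswaps]

theorem exists_rotEquiv_of_sourceReach (hl : IsCoxeterWord l) {o : EdgeOrientation M.graph}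
    (h : EdgeOrientation.SourceReach (wordOrient M l hl.2) o) :
    ∃ (l' : List B) (hl' : IsCoxeterWord l'), RotEquiv M l l' ∧ o = wordOrient M l' hl'.2 := by
  induction h with
  | refl => exact ⟨l, hl, .refl _, rfl⟩
  | tail _ hstep ih =>
    obtain ⟨l₁, hl₁, h₁, rfl⟩ := ih
    obtain ⟨-, s, hs, hdir⟩ := hstep
    obtain ⟨l₂, hl₂, h₂, hdir₂⟩ := exists_rotEquiv_wordOrient_fireDir hl₁ hs
    exact ⟨l₂, hl₂, .trans _ _ _ h₁ h₂, EdgeOrientation.ext (hdir.trans hdir₂.symm)⟩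

theorem reflTransGen_commSwap_of_idxOf_lt : ∀ (l' l : List B), l.Nodup → l.Perm l' →
    (∀ u ∈ l, ∀ v ∈ l, M.graph.Adj u v →
      l'.idxOf u < l'.idxOf v → l.idxOf u < l.idxOf v) →
    Relation.ReflTransGen (CommSwap M) l l'
  | [], l, _, hp, _ => by rw [List.perm_nil.mp hp]
  | a :: t', l, hnd, hp, hord => by
    obtain ⟨p, q, rfl⟩ := List.append_of_mem (hp.mem_iff.mpr List.mem_cons_self)
    have han : a ∉ p ++ q := (List.nodup_cons.mp (List.nodup_middle.mp hnd)).1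
    have hap : a ∉ p := fun h => han (List.mem_append_left q h)
    have hmem : ∀ {u}, u ∈ p ++ q → u ∈ p ++ a :: q := fun hu =>
      List.perm_middle.mem_iff.mpr (List.mem_cons_of_mem a hu)
    have hcomm : ∀ b ∈ p, M b a = 2 := fun b hb => by
      have hba := ne_of_mem_of_not_mem hb hap
      refine M.eq_two_of_not_adj hba fun hadj => ?_
      have hlt := hord a (List.mem_append_right p List.mem_cons_self) b
        (List.mem_append_left _ hb) hadj.symm (by simp [List.idxOf_cons_ne _ hba.symm])
      exact lt_asymm hlt (List.idxOf_lt_idxOf_append_cons hap hb)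
    have hrest := reflTransGen_commSwap_of_idxOf_lt t' (p ++ q)
      (List.nodup_cons.mp (List.nodup_middle.mp hnd)).2
      ((List.perm_cons a).mp (List.perm_middle.symm.trans hp)) fun u hu v hv hadj hlt => by
        have hua := ne_of_mem_of_not_mem hu han
        have hva := ne_of_mem_of_not_mem hv han
        refine (List.idxOf_lt_idxOf_append_cons_iff hua hva).mp
          (hord u (hmem hu) v (hmem hv) hadj ?_)
        simpa [List.idxOf_cons_ne _ hua.symm, List.idxOf_cons_ne _ hva.symm] using hlt
    exact (reflTransGen_commSwap_append_cons hcomm).trans (reflTransGen_commSwap_cons a hrest)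

theorem rotEquiv_of_wordOrient_eq (hl : IsCoxeterWord l) (hl' : IsCoxeterWord l')
    (h : wordOrient M l hl.2 = wordOrient M l' hl'.2) : RotEquiv M l l' := by
  refine rotEquiv_of_reflTransGen_commSwap (reflTransGen_commSwap_of_idxOf_lt l' l hl.1
    ((List.perm_ext_iff_of_nodup hl.1 hl'.1).mpr fun x => iff_of_true (hl.2 x) (hl'.2 x))
    fun u _ v _ hadj hlt => ?_)
  have hdir : (wordOrient M l hl.2).dir u v ↔ (wordOrient M l' hl'.2).dir u v := by rw [h]
  exact (hdir.mpr ⟨hadj, hlt⟩).2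

theorem sourceReach_wordOrient_of_rotStep (hl : IsCoxeterWord l) (hl' : IsCoxeterWord l')
    (h : RotStep M l l') :
    EdgeOrientation.SourceReach (wordOrient M l hl.2) (wordOrient M l' hl'.2) := by
  rcases h with h | ⟨a, t, rfl, rfl⟩
  · rw [h.wordOrient_eq hl.2 hl'.2]
    exact .refl
  · exact .single (sourceFireStep_wordOrient_rotate (List.nodup_cons.mp hl.1).1 hl.2 hl'.2)

theorem sourceReach_wordOrient_of_rotEquiv (h : RotEquiv M l l') (hl : IsCoxeterWord l)
    (hl' : IsCoxeterWord l') :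
    EdgeOrientation.SourceReach (wordOrient M l hl.2) (wordOrient M l' hl'.2) := by
  change Relation.EqvGen (RotStep M) l l' at h
  rw [Relation.eqvGen_eq_reflTransGen_of_reverse fun _ _ => RotStep.reverse] at h
  induction h with
  | refl => exact .refl
  | tail _ hstep ih =>
    have hm := hl'.of_perm hstep.perm.symm
    exact (ih hm).trans (sourceReach_wordOrient_of_rotStep hm hl' hstep)

end WordOrient

open EdgeOrientation in
theorem rotEquiv_iff_reach_general {B : Type*} [DecidableEq B] (M : CoxeterMatrix B) :
    (∀ (i : B) (t : List B) (h : IsCoxeterWord (i :: t)) (h' : IsCoxeterWord (t ++ [i])),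
      SourceFireStep (wordOrient M (i :: t) h.2) (wordOrient M (t ++ [i]) h'.2)) ∧
    (∀ (l l' : List B) (hl : IsCoxeterWord l) (hl' : IsCoxeterWord l'),
      RotEquiv M l l' ↔ SourceReach (wordOrient M l hl.2) (wordOrient M l' hl'.2)) := by
  refine ⟨fun i t h h' => sourceFireStep_wordOrient_rotate (List.nodup_cons.mp h.1).1 h.2 h'.2,
    fun l l' hl hl' => ⟨fun h => sourceReach_wordOrient_of_rotEquiv h hl hl', fun h => ?_⟩⟩
  obtain ⟨l₁, hl₁, hll₁, heq⟩ := exists_rotEquiv_of_sourceReach hl h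
  exact .trans _ _ _ hll₁ (rotEquiv_of_wordOrient_eq hl₁ hl' heq.symm)

open EdgeOrientation in
/-- Rotation of a Coxeter word corresponds exactly to firing the corresponding
source vertex (the first letter), and two Coxeter words are rotation equivalent if and
only if their induced acyclic orientations lie in the same reachability class under
firing. -/
theorem rotEquiv_iff_reach {B : Type*} [Finite B] [DecidableEq B] (M : CoxeterMatrix B) :
    (∀ (i : B) (t : List B) (h : IsCoxeterWord (i :: t)) (h' : IsCoxeterWord (t ++ [i])),
      SourceFireStep (wordOrient M (i :: t) h.2) (wordOrient M (t ++ [i]) h'.2)) ∧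
    (∀ (l l' : List B) (hl : IsCoxeterWord l) (hl' : IsCoxeterWord l'),
      RotEquiv M l l' ↔ SourceReach (wordOrient M l hl.2) (wordOrient M l' hl'.2)) :=
  rotEquiv_iff_reach_general M
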